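/- arXiv:0906.4358 — 3 statements merged into one kernel-verified Lean document; each statement's English description precedes it below -/
import Mathlib

section
/- Let D be an integral domain, let n ≥ 2, let a_{i,j} ∈ D for 1 ≤ i ≤ n−1 and 1 ≤ j ≤ n, and let x_1, ..., x_n ∈ D satisfy the homogeneous linear system Σ_{j=1}^n a_{i,j} x_j = 0 for every i = 1, ..., n−1. If det(A_k) ≠ 0 for every k = 1, ..., n−2, then for every k = 2, ..., n−1 and every i = k, ..., n−1 one has Σ_{j=k}^n b^{(k)}_{i,j} x_j = 0; that is, (x_k, ..., x_n) satisfies each of the eliminated systems. -/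
/-!
By multilinearity, `∑ⱼ xⱼ b⁽ᵏ⁾ᵢⱼ` is the determinant of `A_{k-1}` bordered by row `i` and by the
column `∑ⱼ xⱼ (a₁ⱼ, …, a_{k-1,j}, aᵢⱼ)`, once the sum over `j ≥ k` is extended to all `j ≥ 1`: the
extra summands `j < k` vanish because their bordered matrix repeats column `j`. That column is zero
because `x` solves rows `1, …, k - 1` and `i` of the system.
-/

open Matrix Finset

section
variable {R ι α : Type*} [CommRing R] [Fintype ι] [DecidableEq ι]

theorem Matrix.det_updateCol_sum_smul (A : Matrix ι ι R) (c : ι) (s : Finset α) (x : α → R)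
    (v : α → ι → R) :
    (A.updateCol c (∑ j ∈ s, x j • v j)).det = ∑ j ∈ s, x j * (A.updateCol c (v j)).det := by
  let f : (ι → R) →ₗ[R] R :=
    (detRowAlternating : (ι → R) [⋀^ι]→ₗ[R] R).toMultilinearMap.toLinearMap Aᵀ c
  have hf (u : ι → R) : f u = (A.updateCol c u).det := by
    rw [← det_transpose, ← updateRow_transpose]
    rfl
  simp only [← hf, map_sum, map_smul, smul_eq_mul]

theorem Matrix.sum_det_updateCol_mul_eq_zero (A : Matrix ι ι R) (c : ι) (s : Finset α)
    (x : α → R) (v : α → ι → R) (h : ∑ j ∈ s, x j • v j = 0) :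
    ∑ j ∈ s, (A.updateCol c (v j)).det * x j = 0 := by
  simp_rw [mul_comm _ (x _), ← det_updateCol_sum_smul, h]
  exact det_eq_zero_of_column_eq_zero c fun r => by simp

end

theorem sum_det_borderColumn_mul_eq_zero {R : Type*} [CommRing R] {n k : ℕ} (hk : 1 ≤ k)
    (row : Fin k → ℕ → R) (x : ℕ → R)
    (hrow : ∀ r, ∑ j ∈ Icc 1 n, row r j * x j = 0) :
    ∑ j ∈ Icc k n,
      (of fun r s : Fin k => if (s : ℕ) < k - 1 then row r (s + 1) else row r j).det * x j = 0 := by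
  let last : Fin k := ⟨k - 1, by omega⟩
  let B : Matrix (Fin k) (Fin k) R := of fun r s => row r (s + 1)
  have hupdate (j : ℕ) : (of fun r s : Fin k => if (s : ℕ) < k - 1 then row r (s + 1) else row r j)
      = B.updateCol last fun r => row r j := by
    ext r s
    by_cases hs : (s : ℕ) < k - 1
    · have : s ≠ last := fun h => by simp [h, last] at hs
      simp [updateCol_ne this, hs, B]
    · obtain rfl : s = last := Fin.ext (by simp [last]; omega)
      simp [last]
  have hrepeat : ∀ j ∈ Icc 1 n, j ∉ Icc k n →
      (B.updateCol last fun r => row r j).det * x j = 0 := by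
    intro j hj hjk
    simp only [mem_Icc] at hj hjk
    have hcol : (⟨j - 1, by omega⟩ : Fin k) ≠ last := fun h => by
      simp [last, Fin.ext_iff] at h; omega
    simpa [B, show j - 1 + 1 = j by omega] using
      congrArg (· * x j) (det_updateCol_eq_zero (M := B) hcol)
  simp only [hupdate]
  rw [sum_subset (Icc_subset_Icc_left hk) hrepeat]
  refine sum_det_updateCol_mul_eq_zero B last _ x _ ?_
  ext r
  simpa [mul_comm (x _)] using hrow r

theorem eliminated_systems_consistent_general {D : Type*} [CommRing D]
    (n : ℕ) (a : ℕ → ℕ → D) (x : ℕ → D)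
    (hsys : ∀ i, 1 ≤ i → i ≤ n - 1 → ∑ j ∈ Finset.Icc 1 n, a i j * x j = 0) :
    ∀ k : ℕ, 2 ≤ k → k ≤ n - 1 → ∀ i : ℕ, k ≤ i → i ≤ n - 1 →
      ∑ j ∈ Finset.Icc k n,
        (Matrix.of fun r s : Fin k =>
          if (r : ℕ) < k - 1 then
            (if (s : ℕ) < k - 1 then a (r + 1) (s + 1) else a (r + 1) j)
          else
            (if (s : ℕ) < k - 1 then a i (s + 1) else a i j)).det * x j = 0 := by
  intro k hk hkn i hki hin
  let row (r : Fin k) : ℕ → D := if (r : ℕ) < k - 1 then a (r + 1) else a i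
  have hrow (r : Fin k) : ∑ j ∈ Icc 1 n, row r j * x j = 0 := by
    by_cases hr : (r : ℕ) < k - 1
    · simpa [row, hr] using hsys (r + 1) (by omega) (by omega)
    · simpa [row, hr] using hsys i (by omega) hin
  convert sum_det_borderColumn_mul_eq_zero (by omega) row x hrow using 4 with j
  ext r s
  by_cases hr : (r : ℕ) < k - 1 <;> simp [row, hr]

/-- Elimination in a homogeneous linear system over an integral domain.
`a i j` (for `1 ≤ i ≤ n-1`, `1 ≤ j ≤ n`) are the coefficients, `x 1, …, x n` a solution.
`A_k` is the upper-left `k×k` minor matrix; if all `det A_k ≠ 0` for `k = 1, …, n-2`,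
then `(x_k, …, x_n)` solves each eliminated system, whose coefficients `b^{(k)}_{i,j}`
are the determinants of `A_{k-1}` bordered by column `j` and row `i`. -/
theorem eliminated_systems_consistent {D : Type*} [CommRing D] [IsDomain D]
    (n : ℕ) (hn : 2 ≤ n) (a : ℕ → ℕ → D) (x : ℕ → D)
    (hsys : ∀ i, 1 ≤ i → i ≤ n - 1 → ∑ j ∈ Finset.Icc 1 n, a i j * x j = 0)
    (hdet : ∀ k : ℕ, 1 ≤ k → k ≤ n - 2 →
      (Matrix.of fun r s : Fin k => a (r + 1) (s + 1)).det ≠ 0) :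
    ∀ k : ℕ, 2 ≤ k → k ≤ n - 1 → ∀ i : ℕ, k ≤ i → i ≤ n - 1 →
      ∑ j ∈ Finset.Icc k n,
        (Matrix.of fun r s : Fin k =>
          if (r : ℕ) < k - 1 then
            (if (s : ℕ) < k - 1 then a (r + 1) (s + 1) else a (r + 1) j)
          else
            (if (s : ℕ) < k - 1 then a i (s + 1) else a i j)).det * x j = 0 :=
  eliminated_systems_consistent_general n a x hsys
end

section
/- Let G = (g_1, ..., g_m) be a list of nonzero polynomials in R whose list of leading monomials (lt(g_1), ..., lt(g_m)) satisfies the Extended Criterion. If each of S(g_1, g_2), S(g_2, g_3), ..., S(g_{m−1}, g_m) has an S-representation with respect to G, then gcd(lt(g_1), lt(g_m)) = lt(gcd(g_1, g_m)). -/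
open MvPolynomial

namespace Paper

variable {n : ℕ} {K : Type*} [Field K]

/-- The leading exponent (exponent of the leading monomial) of a polynomial
with respect to a monomial order. -/
noncomputable def lexp (mo : MonomialOrder (Fin n)) (p : MvPolynomial (Fin n) K) :
    Fin n →₀ ℕ :=
  mo.toSyn.symm (p.support.sup fun e => mo.toSyn e)

/-- The leading coefficient. -/
noncomputable def lc (mo : MonomialOrder (Fin n)) (p : MvPolynomial (Fin n) K) : K :=
  p.coeff (lexp mo p)

/-- The exponent of σ_{f,g} = lcm(lt f, lt g)/lt f. -/
noncomputable def sigma (mo : MonomialOrder (Fin n)) (f g : MvPolynomial (Fin n) K) :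
    Fin n →₀ ℕ :=
  (lexp mo f ⊔ lexp mo g) - lexp mo f

/-- The S-polynomial  S(f,g) = lc(g)·σ_{f,g}·f − lc(f)·σ_{g,f}·g. -/
noncomputable def Spoly (mo : MonomialOrder (Fin n)) (f g : MvPolynomial (Fin n) K) :
    MvPolynomial (Fin n) K :=
  monomial (sigma mo f g) (lc mo g) * f - monomial (sigma mo g f) (lc mo f) * g

/-- `h` is a `t`-representation of `p` with respect to `G`. -/
def IsTRep (mo : MonomialOrder (Fin n)) {m : ℕ} (G : Fin m → MvPolynomial (Fin n) K)
    (p : MvPolynomial (Fin n) K) (t : Fin n →₀ ℕ) (h : Fin m → MvPolynomial (Fin n) K) :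
    Prop :=
  p = ∑ i, h i * G i ∧ ∀ i, h i = 0 ∨ mo.toSyn (lexp mo (h i * G i)) ≤ mo.toSyn t

/-- `S(g_i, g_j)` has an S-representation with respect to `G`. -/
def HasSRep (mo : MonomialOrder (Fin n)) {m : ℕ} (G : Fin m → MvPolynomial (Fin n) K)
    (i j : Fin m) : Prop :=
  ∃ t h, mo.toSyn t < mo.toSyn (lexp mo (G i) ⊔ lexp mo (G j)) ∧
    IsTRep mo G (Spoly mo (G i) (G j)) t h

/-- `p` reduces to zero with respect to `G`. -/
def ReducesToZero (mo : MonomialOrder (Fin n)) {m : ℕ}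
    (G : Fin m → MvPolynomial (Fin n) K) (p : MvPolynomial (Fin n) K) : Prop :=
  p = 0 ∨ ∃ (r : ℕ) (e : Fin r → (Fin n →₀ ℕ)) (c : Fin r → K) (ν : Fin r → Fin m),
    (∀ i, c i ≠ 0) ∧
    p = ∑ i, monomial (e i) (c i) * G (ν i) ∧
    ∀ i : Fin r, (e i + lexp mo (G (ν i))) ∈
      (p - ∑ j ∈ Finset.univ.filter (fun j => j < i),
        monomial (e j) (c j) * G (ν j)).support

/-- `G` is a Gröbner basis: the leading monomial of every nonzero element of the ideal
generated by `G` is divisible by the leading monomial of some `G i`. -/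
def IsGroebner (mo : MonomialOrder (Fin n)) {m : ℕ}
    (G : Fin m → MvPolynomial (Fin n) K) : Prop :=
  ∀ p ∈ Ideal.span (Set.range G), p ≠ 0 → ∃ i, lexp mo (G i) ≤ lexp mo p

/-- The Extended Criterion for a list of monomials (given as exponent vectors). -/
def EC {n : ℕ} {m : ℕ} (t : Fin (m + 1) → (Fin n →₀ ℕ)) : Prop :=
  (∀ k, (t 0 ⊓ t (Fin.last m)) ≤ t k) ∧
  ∀ x : Fin n, (t 0 ⊓ t (Fin.last m)) x = 0 ∨
    Monotone (fun i => t i x) ∨ Antitone (fun i => t i x)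

end Paper

/-!
Each S-representation of `S(g_k, g_{k+1})` turns into a syzygy of `G` whose `k`-th and
`(k+1)`-st entries are `lc(g_{k+1}) σ_{k,k+1}` and `-lc(g_k) σ_{k+1,k}` up to terms of lower
degree, degrees being weighted by `lt(g_i)` in the `i`-th entry, and whose other entries have lower
weighted degree. Dropping the last entries of these `m - 1` syzygies leaves a square matrix `A`
with `A (g_1, …, g_{m-1}) = -g_m b` whose rows are dominated by their diagonal entries, so
`det A ≠ 0` with `lt(det A) = ∏ₖ σ_{k,k+1}`, and Cramer's rule gives `det A · g_1 + Q g_m = 0`.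
Writing `g_1 = p u`, `g_m = p v` with `p` a gcd, `u` and `v` are coprime, so `v ∣ det A` and
`lt v ∣ ∏ₖ σ_{k,k+1}`. Along a variable `x` with increasing exponents this product has
`x`-degree `deg_x g_m - deg_x g_1`, which forces `deg_x u = 0`; with decreasing exponents it has
`x`-degree `0`, forcing `deg_x v = 0`. Either way `min (deg_x g_1) (deg_x g_m) = deg_x p`.
-/

open MvPolynomial MonomialOrder
open scoped MonomialOrder Matrix

theorem Equiv.Perm.exists_lt_apply_of_ne_one {m : ℕ} {π : Equiv.Perm (Fin m)} (hπ : π ≠ 1) :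
    ∃ i, i < π i := by
  by_contra! h
  have hsum := (Finset.sum_eq_sum_iff_of_le fun i _ => Fin.val_le_of_le (h i)).mp
    (Equiv.sum_comp π fun i => (i : ℕ))
  exact hπ (Equiv.ext fun i => Fin.ext (hsum i (Finset.mem_univ i)))

theorem Fin.sum_tsub_add_of_monotone {m : ℕ} {a : Fin (m + 1) → ℕ} (ha : Monotone a) :
    ∑ k : Fin m, (a k.succ - a k.castSucc) + a 0 = a (Fin.last m) := by
  induction m with
  | zero => simp
  | succ m ih =>
    have h := ih (ha.comp Fin.strictMono_castSucc.monotone)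
    have hle := ha (Fin.castSucc_le_succ (Fin.last m))
    simp only [Function.comp_apply, Fin.castSucc_zero] at h
    rw [Fin.sum_univ_castSucc]
    simp only [Fin.succ_castSucc, Fin.succ_last, Nat.succ_eq_add_one] at hle ⊢
    omega

theorem Finsupp.inf_eq_of_le_sum_tsub {ι : Type*} {m : ℕ} {t : Fin (m + 1) → ι →₀ ℕ}
    (hvar : ∀ x, (t 0 ⊓ t (Fin.last m)) x = 0 ∨
      Monotone (fun i => t i x) ∨ Antitone (fun i => t i x))
    {d u v : ι →₀ ℕ} (h0 : t 0 = d + u) (hlast : t (Fin.last m) = d + v)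
    (hv : v ≤ ∑ k : Fin m, (t k.succ - t k.castSucc)) : t 0 ⊓ t (Fin.last m) = d := by
  ext x
  have hvx : v x ≤ ∑ k : Fin m, (t k.succ x - t k.castSucc x) := by
    simpa only [Finsupp.finsetSum_apply, Finsupp.tsub_apply] using hv x
  have h0x := congrArg (· x) h0
  have hlastx := congrArg (· x) hlast
  simp only [Finsupp.add_apply] at h0x hlastx
  rw [Finsupp.inf_apply]
  rcases hvar x with hzero | hmono | hanti
  · rw [Finsupp.inf_apply] at hzero
    omega
  · have := Fin.sum_tsub_add_of_monotone hmono
    omega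
  · have hsum : ∑ k : Fin m, (t k.succ x - t k.castSucc x) = 0 :=
      Finset.sum_eq_zero fun k _ => Nat.sub_eq_zero_of_le (hanti (Fin.castSucc_le_succ k))
    have := hanti (Fin.zero_le (Fin.last m))
    omega

theorem Matrix.det_smul_eq_smul_cramer {ι R : Type*} [Fintype ι] [DecidableEq ι] [CommRing R]
    {A : Matrix ι ι R} {v b : ι → R} {c : R} (h : A *ᵥ v = c • b) :
    A.det • v = c • A.cramer b := by
  rw [Matrix.cramer_eq_adjugate_mulVec, ← Matrix.mulVec_smul, ← h, Matrix.mulVec_mulVec,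
    Matrix.adjugate_mul, Matrix.smul_mulVec, Matrix.one_mulVec]

theorem dvd_of_mul_add_mul_eq_zero {R : Type*} [CommRing R] [IsDomain R] [DecompositionMonoid R]
    {p u v P Q : R} (hp : p ≠ 0) (hgcd : ∀ q, q ∣ p * u → q ∣ p * v → q ∣ p)
    (h : P * (p * u) + Q * (p * v) = 0) : v ∣ P := by
  have hrel : IsRelPrime v u := fun d hdv hdu => by
    have hpd : p * d ∣ p * 1 := by
      rw [mul_one]; exact hgcd _ (mul_dvd_mul_left p hdu) (mul_dvd_mul_left p hdv)
    exact isUnit_of_dvd_one ((mul_dvd_mul_iff_left hp).mp hpd)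
  have h' : p * (u * P + v * Q) = 0 := by linear_combination h
  have h'' := (mul_eq_zero.mp h').resolve_left hp
  exact hrel.dvd_of_dvd_mul_left ⟨-Q, by linear_combination h''⟩

theorem MvPolynomial.eq_of_mem_support_pi_single_monomial {σ R ι : Type*} [CommSemiring R]
    [DecidableEq ι] {i k : ι} {s c : σ →₀ ℕ} {a : R}
    (hc : c ∈ (Pi.single (M := fun _ => MvPolynomial σ R) i (monomial s a) k).support) :
    k = i ∧ c = s := by
  by_cases hk : k = i
  · subst hk
    rw [Pi.single_eq_same] at hc
    exact ⟨rfl, Finset.mem_singleton.mp (support_monomial_subset hc)⟩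
  · simp [hk] at hc

namespace MonomialOrder

variable {σ R : Type*} [CommRing R] [IsDomain R] (mo : MonomialOrder σ)
  {m : ℕ} {A : Matrix (Fin m) (Fin m) (MvPolynomial σ R)} {w : Fin m → σ →₀ ℕ}

theorem degree_prod_perm_lt_of_dominant_diagonal
    (hle : ∀ i j, ∀ c ∈ (A i j).support, c + w j ≼[mo] mo.degree (A i i) + w i)
    (hlt : ∀ i j, j < i → ∀ c ∈ (A i j).support, c + w j ≺[mo] mo.degree (A i i) + w i)
    {π : Equiv.Perm (Fin m)} (hπ : π ≠ 1) (hA : ∀ i, A (π i) i ≠ 0) :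
    mo.degree (∏ i, A (π i) i) ≺[mo] ∑ i, mo.degree (A i i) := by
  obtain ⟨i₀, hi₀⟩ := Equiv.Perm.exists_lt_apply_of_ne_one hπ
  have key : ∑ i, (mo.toSyn (mo.degree (A (π i) i)) + mo.toSyn (w i)) <
      ∑ i, mo.toSyn (mo.degree (A (π i) (π i)) + w (π i)) :=
    Finset.sum_lt_sum (fun i _ => by simpa using hle (π i) i _ (mo.degree_mem_support (hA i)))
      ⟨i₀, Finset.mem_univ _, by simpa using hlt _ _ hi₀ _ (mo.degree_mem_support (hA i₀))⟩
  rw [Equiv.sum_comp π fun i => mo.toSyn (mo.degree (A i i) + w i)] at key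
  simp only [map_add, Finset.sum_add_distrib] at key
  rw [mo.degree_prod fun i _ => hA i, map_sum, map_sum]
  exact lt_of_add_lt_add_right key

theorem withBotDegree_det_of_dominant_diagonal (hdiag : ∀ i, A i i ≠ 0)
    (hle : ∀ i j, ∀ c ∈ (A i j).support, c + w j ≼[mo] mo.degree (A i i) + w i)
    (hlt : ∀ i j, j < i → ∀ c ∈ (A i j).support, c + w j ≺[mo] mo.degree (A i i) + w i) :
    mo.withBotDegree A.det = ↑(∑ i, mo.degree (A i i)) := by
  have hprod : ∏ i, A i i ≠ 0 := Finset.prod_ne_zero_iff.mpr fun i _ => hdiag i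
  have hdeg : mo.degree (∏ i, A i i) = ∑ i, mo.degree (A i i) :=
    mo.degree_prod fun i _ => hdiag i
  -- In `withBotDegree`, the terms of permutations whose product vanishes are of lower degree too.
  have hterm : ∀ π ∈ Finset.univ.erase (1 : Equiv.Perm (Fin m)),
      mo.withBotDegree (Equiv.Perm.sign π • ∏ i, A (π i) i) ≺'[mo]
        mo.withBotDegree (∏ i, A i i) := by
    intro π hπ
    refine lt_of_le_of_lt (mo.withBotDegree_le_withBotDegree_of_support_subset support_smul) ?_
    rw [mo.withBotDegree_lt_withBotDegree_iff]
    by_cases! hA : ∀ i, A (π i) i ≠ 0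
    · exact Or.inl (hdeg ▸ mo.degree_prod_perm_lt_of_dominant_diagonal hle hlt
        (Finset.ne_of_mem_erase hπ) hA)
    · obtain ⟨i, hi⟩ := hA
      exact Or.inr ⟨Finset.prod_eq_zero (Finset.mem_univ i) hi, hprod⟩
  have hrest := lt_of_le_of_lt mo.withBotDegree_sum_le <| (Finset.sup_lt_iff (by
    simp [(mo.withBotDegree_eq_coe_degree_iff _).mpr hprod, mo.toWithBotSyn_apply_coe])).mpr hterm
  rw [Matrix.det_apply, ← Finset.add_sum_erase _ _ (Finset.mem_univ 1)]
  simp only [Equiv.Perm.sign_one, one_smul, Equiv.Perm.one_apply]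
  rw [mo.withBotDegree_add_of_lt hrest, (mo.withBotDegree_eq_coe_degree_iff _).mpr hprod, hdeg]

theorem degree_det_of_dominant_diagonal (hdiag : ∀ i, A i i ≠ 0)
    (hle : ∀ i j, ∀ c ∈ (A i j).support, c + w j ≼[mo] mo.degree (A i i) + w i)
    (hlt : ∀ i j, j < i → ∀ c ∈ (A i j).support, c + w j ≺[mo] mo.degree (A i i) + w i) :
    A.det ≠ 0 ∧ mo.degree A.det = ∑ i, mo.degree (A i i) := by
  have h := mo.withBotDegree_det_of_dominant_diagonal hdiag hle hlt
  refine ⟨fun h0 => WithBot.bot_ne_coe (by rwa [h0, withBotDegree_zero] at h), ?_⟩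
  rw [degree_eq_unbotD_withBotDegree, h, WithBot.unbotD_coe]

end MonomialOrder

namespace Paper

section

variable {n : ℕ} {K : Type*} [Field K] (mo : MonomialOrder (Fin n))

theorem lexp_eq_degree (p : MvPolynomial (Fin n) K) : lexp mo p = mo.degree p := rfl

theorem sigma_add_lexp (f g : MvPolynomial (Fin n) K) :
    sigma mo f g + lexp mo f = lexp mo f ⊔ lexp mo g :=
  tsub_add_cancel_of_le le_sup_left

theorem sigma_eq_tsub (f g : MvPolynomial (Fin n) K) : sigma mo f g = lexp mo g - lexp mo f := by
  ext x
  simp only [sigma, Finsupp.tsub_apply, Finsupp.sup_apply]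
  omega

section Syzygy

variable {m : ℕ} {G : Fin m → MvPolynomial (Fin n) K}

theorem IsTRep.support_add_lexp_lt (hG : ∀ k, G k ≠ 0) {p : MvPolynomial (Fin n) K}
    {t L : Fin n →₀ ℕ} {h : Fin m → MvPolynomial (Fin n) K}
    (hrep : IsTRep mo G p t h) (htL : t ≺[mo] L) (k : Fin m) :
    ∀ c ∈ (h k).support, c + lexp mo (G k) ≺[mo] L := by
  intro c hc
  have hk : h k ≠ 0 := by rintro h0; simp [h0] at hc
  rcases hrep.2 k with h0 | hkt
  · exact absurd h0 hk
  calc mo.toSyn (c + lexp mo (G k)) ≤ mo.toSyn (lexp mo (h k) + lexp mo (G k)) := by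
        rw [map_add, map_add]; exact add_le_add_left (mo.le_degree hc) _
    _ = mo.toSyn (lexp mo (h k * G k)) := by
        simp only [lexp_eq_degree, mo.degree_mul hk (hG k)]
    _ ≤ mo.toSyn t := hkt
    _ < mo.toSyn L := htL

theorem exists_syzygy_of_hasSRep (hG : ∀ k, G k ≠ 0) {i j : Fin m} (hij : i ≠ j)
    (hS : HasSRep mo G i j) :
    ∃ M : Fin m → MvPolynomial (Fin n) K, ∑ k, M k * G k = 0 ∧
      (∀ k, ∀ c ∈ (M k).support, c + lexp mo (G k) ≼[mo] lexp mo (G i) ⊔ lexp mo (G j)) ∧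
      (∀ k, k ≠ i → k ≠ j → ∀ c ∈ (M k).support,
        c + lexp mo (G k) ≺[mo] lexp mo (G i) ⊔ lexp mo (G j)) ∧
      M i ≠ 0 ∧ lexp mo (M i) = sigma mo (G i) (G j) := by
  classical
  obtain ⟨t, h, htL, hrep⟩ := hS
  have hh := hrep.support_add_lexp_lt mo hG htL
  set M := Pi.single i (monomial (sigma mo (G i) (G j)) (lc mo (G j))) -
    Pi.single j (monomial (sigma mo (G j) (G i)) (lc mo (G i))) - h
  have hsum : ∑ k, M k * G k = 0 := by
    simp only [M, Pi.sub_apply, Pi.single_apply, sub_mul, ite_mul, zero_mul,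
      Finset.sum_sub_distrib, Finset.sum_ite_eq', Finset.mem_univ, ↓reduceIte]
    rw [← hrep.1]
    exact sub_self _
  have hle : ∀ k, ∀ c ∈ (M k).support,
      c + lexp mo (G k) ≼[mo] lexp mo (G i) ⊔ lexp mo (G j) := by
    intro k c hc
    rcases Finset.mem_union.mp (support_sub _ _ _ hc) with hc | hc
    · rcases Finset.mem_union.mp (support_sub _ _ _ hc) with hc | hc
      · obtain ⟨rfl, rfl⟩ := eq_of_mem_support_pi_single_monomial hc
        rw [sigma_add_lexp]
      · obtain ⟨rfl, rfl⟩ := eq_of_mem_support_pi_single_monomial hc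
        rw [sigma_add_lexp, sup_comm]
    · exact (hh k c hc).le
  have hlt : ∀ k, k ≠ i → k ≠ j → ∀ c ∈ (M k).support,
      c + lexp mo (G k) ≺[mo] lexp mo (G i) ⊔ lexp mo (G j) := by
    intro k hki hkj c hc
    simp only [M, Pi.sub_apply, Pi.single_eq_of_ne hki, Pi.single_eq_of_ne hkj, sub_self,
      zero_sub, support_neg] at hc
    exact hh k c hc
  have hσ : (M i).coeff (sigma mo (G i) (G j)) = lc mo (G j) := by
    have hhi : (h i).coeff (sigma mo (G i) (G j)) = 0 := by
      by_contra hne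
      have := hh i _ (mem_support_iff.mpr hne)
      rw [sigma_add_lexp] at this
      exact lt_irrefl _ this
    simp [M, hij, hhi]
  have hσ0 : (M i).coeff (sigma mo (G i) (G j)) ≠ 0 :=
    hσ ▸ mo.leadingCoeff_ne_zero_iff.mpr (hG j)
  refine ⟨M, hsum, hle, hlt, fun h0 => hσ0 (by rw [h0, coeff_zero]), ?_⟩
  refine mo.toSyn.injective (le_antisymm (mo.degree_le_iff.mpr fun c hc => ?_)
    (mo.le_degree (mem_support_iff.mpr hσ0)))
  have := hle i c hc
  rw [← sigma_add_lexp, map_add, map_add] at this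
  exact le_of_add_le_add_right this

end Syzygy

theorem exists_relation_of_chain {m : ℕ} (G : Fin (m + 1) → MvPolynomial (Fin n) K)
    (hG : ∀ i, G i ≠ 0) (hchain : ∀ i : Fin m, HasSRep mo G i.castSucc i.succ) :
    ∃ P Q : MvPolynomial (Fin n) K, P ≠ 0 ∧ P * G 0 + Q * G (Fin.last m) = 0 ∧
      lexp mo P = ∑ k : Fin m, sigma mo (G k.castSucc) (G k.succ) := by
  cases m with
  | zero => exact ⟨1, -1, one_ne_zero, by simp [Fin.last_zero], by simp [lexp_eq_degree]⟩
  | succ m =>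
    choose M hsum hle hlt hne hdeg using fun k : Fin (m + 1) =>
      exists_syzygy_of_hasSRep mo hG (Fin.castSucc_lt_succ (i := k)).ne (hchain k)
    set A : Matrix (Fin (m + 1)) (Fin (m + 1)) (MvPolynomial (Fin n) K) :=
      Matrix.of fun x l => M x l.castSucc
    have hA : A *ᵥ (fun l => G l.castSucc) = (-G (Fin.last _)) • fun x => M x (Fin.last _) := by
      funext x
      have := hsum x
      rw [Fin.sum_univ_castSucc] at this
      simp only [Matrix.mulVec, dotProduct, A, Matrix.of_apply, Pi.smul_apply, smul_eq_mul]
      linear_combination this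
    have hdiag : ∀ i, mo.degree (A i i) + lexp mo (G i.castSucc) =
        lexp mo (G i.castSucc) ⊔ lexp mo (G i.succ) := fun i => by
      rw [← lexp_eq_degree, ← sigma_add_lexp, ← hdeg]
      rfl
    obtain ⟨hdet, hdegdet⟩ := mo.degree_det_of_dominant_diagonal (A := A)
      (w := fun l => lexp mo (G l.castSucc)) hne
      (fun i j c hc => hdiag i ▸ hle i j.castSucc c hc)
      (fun i j hji c hc => hdiag i ▸ hlt i j.castSucc (Fin.castSucc_injective _ |>.ne hji.ne)
        (Fin.castSucc_lt_succ_iff.mpr hji.le).ne c hc)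
    refine ⟨A.det, A.cramer (fun x => M x (Fin.last _)) 0, hdet, ?_, ?_⟩
    · have := congrFun (Matrix.det_smul_eq_smul_cramer hA) 0
      simp only [Pi.smul_apply, smul_eq_mul, Fin.castSucc_zero] at this
      linear_combination this
    · rw [lexp_eq_degree, hdegdet]
      exact Finset.sum_congr rfl fun i _ => hdeg i

end

/-- If the leading monomials of `G = (g_1, …, g_{m+1})` satisfy the Extended Criterion and
each consecutive S-polynomial has an S-representation with respect to `G`, then
`gcd(lt g_1, lt g_{m+1}) = lt(gcd(g_1, g_{m+1}))` (for any gcd `p` of `g_1` and `g_{m+1}`). -/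
theorem chain_implies_gcd_commutes {n : ℕ} {K : Type*} [Field K]
    (mo : MonomialOrder (Fin n)) {m : ℕ}
    (G : Fin (m + 1) → MvPolynomial (Fin n) K) (hG : ∀ i, G i ≠ 0)
    (hEC : EC (fun i => lexp mo (G i)))
    (hchain : ∀ i : Fin m, HasSRep mo G i.castSucc i.succ)
    (p : MvPolynomial (Fin n) K)
    (hp₁ : p ∣ G 0) (hpₘ : p ∣ G (Fin.last m))
    (hpgcd : ∀ q : MvPolynomial (Fin n) K, q ∣ G 0 → q ∣ G (Fin.last m) → q ∣ p) :
    lexp mo (G 0) ⊓ lexp mo (G (Fin.last m)) = lexp mo p := by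
  obtain ⟨u, hu⟩ := hp₁
  obtain ⟨v, hv⟩ := hpₘ
  have hp : p ≠ 0 := by rintro rfl; exact hG 0 (by rw [hu, zero_mul])
  have hu0 : u ≠ 0 := by rintro rfl; exact hG 0 (by rw [hu, mul_zero])
  have hv0 : v ≠ 0 := by rintro rfl; exact hG _ (by rw [hv, mul_zero])
  obtain ⟨P, Q, hP, hrel, hdegP⟩ := exists_relation_of_chain mo G hG hchain
  rw [hu, hv] at hpgcd hrel
  obtain ⟨s, rfl⟩ : v ∣ P := dvd_of_mul_add_mul_eq_zero hp hpgcd hrel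
  have hs : s ≠ 0 := right_ne_zero_of_mul hP
  have h0 : lexp mo (G 0) = lexp mo p + lexp mo u := by rw [hu]; exact mo.degree_mul hp hu0
  have hl : lexp mo (G (Fin.last m)) = lexp mo p + lexp mo v := by
    rw [hv]; exact mo.degree_mul hp hv0
  have hvs : lexp mo v ≤ ∑ k : Fin m, (lexp mo (G k.succ) - lexp mo (G k.castSucc)) :=
    calc lexp mo v ≤ lexp mo (v * s) := by
          rw [lexp_eq_degree, lexp_eq_degree, mo.degree_mul hv0 hs]; exact le_self_add
      _ = _ := by rw [hdegP]; simp only [sigma_eq_tsub]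
  exact Finsupp.inf_eq_of_le_sum_tsub (t := fun i => lexp mo (G i)) hEC.2 h0 hl hvs

end Paper
end

section
/- Let p, f_1, f_2 be nonzero polynomials in R, and set g_1 = f_1·p and g_2 = f_2·p. If the leading monomials lt(f_1) and lt(f_2) are relatively prime, then gcd(lt(g_1), lt(g_2)) = lt(p). In particular, if p = gcd(g_1, g_2) and the leading monomials of the cofactors g_1/p and g_2/p are relatively prime, then lt(gcd(g_1, g_2)) = gcd(lt(g_1), lt(g_2)). -/
open MvPolynomial

namespace Paper

open MvPolynomial

lemma lexp_mul' {n : ℕ} {K : Type*} [Field K] (mo : MonomialOrder (Fin n))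
    {p q : MvPolynomial (Fin n) K}
    (hp : p ≠ 0) (hq : q ≠ 0) : lexp mo (p * q) = lexp mo p + lexp mo q := by
  have hD : Function.Injective ⇑mo.toSyn := mo.toSyn.injective
  have hadd : ∀ a b : Fin n →₀ ℕ, mo.toSyn (a + b) = mo.toSyn a + mo.toSyn b := map_add _
  have h1 : (p * q).support.sup (fun e => mo.toSyn e)
      = p.support.sup (fun e => mo.toSyn e) + q.support.sup (fun e => mo.toSyn e) := by
    have := AddMonoidAlgebra.supDegree_mul (R := K) (A := Fin n →₀ ℕ) (B := mo.syn)
      (D := ⇑mo.toSyn) (p := p) (q := q) hD hadd ?_ hp hq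
    · exact this
    · apply mul_ne_zero <;> rw [Ne, AddMonoidAlgebra.leadingCoeff_eq_zero hD] <;> assumption
  unfold lexp
  rw [h1, map_add]

/-- If `g₁ = f₁·p` and `g₂ = f₂·p` with `p, f₁, f₂` nonzero and the leading monomials of
`f₁` and `f₂` relatively prime, then `gcd(lt g₁, lt g₂) = lt p`.  In particular, when `p` is
a gcd of `g₁` and `g₂`, `lt(gcd(g₁, g₂)) = gcd(lt g₁, lt g₂)`. -/
theorem gcd_of_lts_of_relprime_cofactors {n : ℕ} {K : Type*} [Field K]
    (mo : MonomialOrder (Fin n)) (p f₁ f₂ g₁ g₂ : MvPolynomial (Fin n) K)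
    (hp : p ≠ 0) (hf₁ : f₁ ≠ 0) (hf₂ : f₂ ≠ 0)
    (hg₁ : g₁ = f₁ * p) (hg₂ : g₂ = f₂ * p)
    (hrp : lexp mo f₁ ⊓ lexp mo f₂ = 0) :
    lexp mo g₁ ⊓ lexp mo g₂ = lexp mo p ∧
    ((∀ q : MvPolynomial (Fin n) K, q ∣ g₁ → q ∣ g₂ → q ∣ p) →
      lexp mo p = lexp mo g₁ ⊓ lexp mo g₂) := by
  have h1 : lexp mo g₁ = lexp mo f₁ + lexp mo p := hg₁ ▸ lexp_mul' mo hf₁ hp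
  have h2 : lexp mo g₂ = lexp mo f₂ + lexp mo p := hg₂ ▸ lexp_mul' mo hf₂ hp
  have key : lexp mo g₁ ⊓ lexp mo g₂ = lexp mo p := by
    ext x
    have hx : min (lexp mo f₁ x) (lexp mo f₂ x) = 0 := by
      have := congrFun (congrArg (fun f : (Fin n →₀ ℕ) => ⇑f) hrp) x
      simpa [Finsupp.inf_apply] using this
    have : (lexp mo g₁ ⊓ lexp mo g₂) x = min (lexp mo g₁ x) (lexp mo g₂ x) := by
      simp [Finsupp.inf_apply]
    rw [this, h1, h2]
    simp only [Finsupp.add_apply]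
    omega
  exact ⟨key, fun _ => key.symm⟩

end Paper
end
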